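/- Let x, y be words of equal length with x·y ≠ y·x. If w is a list over {x,y} of length at least 2 that is primitive (as a list) and concat w is imprimitive, then x and y are not conjugate. -/

import Mathlib

/-- `wpow u n` is the `n`-fold concatenation of `u` with itself. -/
def wpow {α : Type*} (u : List α) (n : ℕ) : List α := (List.replicate n u).flatten

/-- Primitivity: nonempty and not a proper power. -/
def Prim {α : Type*} (w : List α) : Prop := w ≠ [] ∧ ∀ (t : List α) (k : ℕ), 2 ≤ k → w ≠ wpow t k

/-- A word is imprimitive if it is empty or a proper power. -/
def Imprim {α : Type*} (w : List α) : Prop := ∃ (t : List α) (k : ℕ), 2 ≤ k ∧ w = wpow t k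

/-!
Write `x = r q`, `y = q r`, `n = |x| = |y|`, and let `p` be the least period of the periodic
extension `f` of `z = concat w`; then `p ∣ |z|` and `p < |z|`. Each of `p ∣ n` and `n ∣ p` would
make `w` invariant under a proper cyclic shift, so neither holds. Put `g = gcd n p`. Every
multiple of `g` is congruent modulo `p` to a block boundary, so the factor of `f` of length `n` at
`i g` is `x` or `y`, and consecutive such windows overlap in `n - g ≥ g` letters.

If two consecutive windows are equal, that word has period `g`, hence so has its conjugate, and
then `f` has period `g`, contradicting `p ∤ n`. Otherwise the windows alternate, so `p = 2 g` and
`n` is an odd multiple of `g`; then one of `x`, `y` occurs at `0` and the other at `g`, and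
comparing the two occurrences of `r` and of `q` forces `f (k + g) = f k` on an interval of length
`g`, which would make `g` a period.
-/

open Function

section

variable {α β : Type*}

lemma wpow_succ (t : List α) (k : ℕ) : wpow t (k + 1) = t ++ wpow t k := by
  simp [wpow, List.replicate_succ]

lemma length_wpow (t : List α) (k : ℕ) : (wpow t k).length = k * t.length := by
  simp [wpow]

lemma getElem?_wpow {t : List α} {k i : ℕ} (h : i < k * t.length) :
    (wpow t k)[i]? = t[i % t.length]? := by
  induction k generalizing i with
  | zero => simp at h
  | succ k ih =>
    rw [wpow_succ]
    rcases Nat.lt_or_ge i t.length with hi | hi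
    · rw [List.getElem?_append_left hi, Nat.mod_eq_of_lt hi]
    · rw [List.getElem?_append_right hi, ih (by rw [Nat.succ_mul] at h; omega),
        Nat.mod_eq_sub_mod hi]

def cyclicExt (u : List α) (k : ℕ) : Option α := u[k % u.length]?

lemma periodic_cyclicExt (u : List α) : Periodic (cyclicExt u) u.length := by
  intro k
  simp [cyclicExt]

lemma cyclicExt_of_lt {u : List α} {k : ℕ} (h : k < u.length) : cyclicExt u k = u[k]? := by
  rw [cyclicExt, Nat.mod_eq_of_lt h]

lemma cyclicExt_wpow (t : List α) {k : ℕ} (hk : 0 < k) : cyclicExt (wpow t k) = cyclicExt t := by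
  funext i
  rcases eq_or_ne t [] with rfl | ht
  · simp [cyclicExt, wpow]
  have hpos : 0 < k * t.length := Nat.mul_pos hk (List.length_pos_iff.mpr ht)
  rw [cyclicExt, cyclicExt, length_wpow, getElem?_wpow (Nat.mod_lt _ hpos),
    Nat.mod_mod_of_dvd _ (dvd_mul_left _ _)]

lemma cyclicExt_append_comm (r q : List α) (k : ℕ) :
    cyclicExt (q ++ r) k = cyclicExt (r ++ q) (k + r.length) := by
  rcases eq_or_ne (r ++ q) [] with h | h
  · simp_all [cyclicExt]
  rw [← List.rotate_append_length_eq, cyclicExt, cyclicExt, List.length_rotate,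
    List.getElem?_rotate (Nat.mod_lt _ (List.length_pos_iff.mpr h)), Nat.mod_add_mod]

lemma Function.Periodic.cyclicExt_append_comm {r q : List α} {g : ℕ}
    (h : Periodic (cyclicExt (r ++ q)) g) : Periodic (cyclicExt (q ++ r)) g := by
  intro k
  rw [_root_.cyclicExt_append_comm r q, _root_.cyclicExt_append_comm r q k, add_right_comm, h]

lemma getElem?_eq_getElem?_mod {l : List α} {s : ℕ} (hs0 : 0 < s)
    (hs : ∀ i, i + s < l.length → l[i + s]? = l[i]?) :
    ∀ i, i < l.length → l[i]? = l[i % s]? := by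
  intro i
  induction i using Nat.strong_induction_on with
  | _ i ih =>
    intro hi
    rcases Nat.lt_or_ge i s with his | his
    · rw [Nat.mod_eq_of_lt his]
    · obtain ⟨j, rfl⟩ := Nat.exists_eq_add_of_le' his
      rw [hs j hi, ih j (by omega) (by omega), Nat.add_mod_right]

lemma periodic_cyclicExt_of_getElem?_add {l : List α} {s : ℕ} (hs0 : 0 < s)
    (hdvd : s ∣ l.length)
    (hs : ∀ i, i + s < l.length → l[i + s]? = l[i]?) : Periodic (cyclicExt l) s := by
  have hmod : ∀ k, cyclicExt l k = l[k % s]? := by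
    intro k
    rcases eq_or_ne l [] with rfl | hl
    · simp [cyclicExt]
    rw [cyclicExt, getElem?_eq_getElem?_mod hs0 hs _ (Nat.mod_lt _ (List.length_pos_iff.mpr hl)),
      Nat.mod_mod_of_dvd _ hdvd]
  intro k
  rw [hmod, hmod, Nat.add_mod_right]

lemma eq_wpow_of_periodic_cyclicExt {l : List α} {s : ℕ} (hs : 0 < s) (hdvd : s ∣ l.length)
    (h : Periodic (cyclicExt l) s) : l = wpow (l.take s) (l.length / s) := by
  rcases eq_or_ne l [] with rfl | hl
  · simp [wpow]
  have htake : (l.take s).length = s :=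
    List.length_take_of_le (Nat.le_of_dvd (List.length_pos_iff.mpr hl) hdvd)
  apply List.ext_getElem?
  intro i
  rcases Nat.lt_or_ge i l.length with hi | hi
  · have hlt : i < l.length / s * (l.take s).length := by rwa [htake, Nat.div_mul_cancel hdvd]
    rw [getElem?_wpow hlt, htake, List.getElem?_take_of_lt (Nat.mod_lt _ hs),
      ← cyclicExt_of_lt hi, ← h.map_mod_nat, cyclicExt_of_lt (lt_of_le_of_lt (Nat.mod_le _ _) hi)]
  · rw [List.getElem?_eq_none hi, List.getElem?_eq_none]
    rwa [length_wpow, htake, Nat.div_mul_cancel hdvd]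

lemma not_prim_of_periodic_cyclicExt {l : List α} {s : ℕ} (hs : 0 < s) (hsl : s < l.length)
    (hdvd : s ∣ l.length) (h : Periodic (cyclicExt l) s) : ¬ Prim l := fun hl =>
  hl.2 _ _ ((Nat.lt_div_iff_mul_lt' hdvd 1).mpr (by omega))
    (eq_wpow_of_periodic_cyclicExt hs hdvd h)

lemma iterate_shift_apply (f : ℕ → β) (s k : ℕ) :
    (fun g : ℕ → β => g ∘ Nat.succ)^[s] f k = f (k + s) := by
  induction s generalizing k with
  | zero => rfl
  | succ s ih =>
    rw [iterate_succ_apply', Function.comp_apply, ih, Nat.succ_add]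
    rfl

lemma periodic_iff_isPeriodicPt_shift (f : ℕ → β) (s : ℕ) :
    Periodic f s ↔ IsPeriodicPt (fun g : ℕ → β => g ∘ Nat.succ) s f := by
  simp only [IsPeriodicPt, IsFixedPt, funext_iff, iterate_shift_apply, Periodic]

lemma exists_forall_periodic_iff_dvd {f : ℕ → β} {c : ℕ} (hc : 0 < c) (hf : Periodic f c) :
    ∃ p, 0 < p ∧ ∀ s, Periodic f s ↔ p ∣ s :=
  ⟨_, ((periodic_iff_isPeriodicPt_shift f c).mp hf).minimalPeriod_pos hc, fun s => by
    rw [periodic_iff_isPeriodicPt_shift, isPeriodicPt_iff_minimalPeriod_dvd]⟩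

lemma Function.Periodic.of_forall_Ico {f : ℕ → β} {P s a : ℕ} (hf : Periodic f P)
    (hP : 0 < P) (h : ∀ k, a ≤ k → k < a + P → f (k + s) = f k) : Periodic f s := by
  have hge : ∀ k, a ≤ k → f (k + s) = f k := by
    intro k
    induction k using Nat.strong_induction_on with
    | _ k ih =>
      intro hk
      rcases Nat.lt_or_ge k (a + P) with hlt | hle
      · exact h k hk hlt
      · obtain ⟨j, rfl⟩ := Nat.exists_eq_add_of_le' (le_trans (Nat.le_add_left P a) hle)
        rw [add_right_comm, hf, hf, ih j (by omega) (by omega)]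
  intro k
  rw [← hf.nat_mul a (k + s), ← hf.nat_mul a k, add_right_comm]
  exact hge _ (le_add_left (Nat.le_mul_of_pos_right a hP))

lemma Function.Periodic.of_forall_Ico_half {f : ℕ → β} {g a : ℕ} (hf : Periodic f (2 * g))
    (hg : 0 < g) (h : ∀ k, a ≤ k → k < a + g → f (k + g) = f k) : Periodic f g := by
  refine hf.of_forall_Ico (a := a) (by omega) fun k hk₁ hk₂ => ?_
  rcases Nat.lt_or_ge k (a + g) with hlt | hle
  · exact h k hk₁ hlt
  · obtain ⟨j, rfl⟩ := Nat.exists_eq_add_of_le' (le_trans (Nat.le_add_left g a) hle)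
    rw [h j (by omega) (by omega), add_assoc, ← two_mul, hf]

def OccursAt (f : ℕ → Option α) (a : ℕ) (u : List α) : Prop :=
  ∀ i < u.length, f (a + i) = u[i]?

lemma OccursAt.eq {f : ℕ → Option α} {a : ℕ} {u v : List α} (hu : OccursAt f a u)
    (hv : OccursAt f a v) (hlen : u.length = v.length) : u = v := by
  apply List.ext_getElem?
  intro i
  rcases Nat.lt_or_ge i u.length with hi | hi
  · rw [← hu i hi, hv i (hlen ▸ hi)]
  · rw [List.getElem?_eq_none hi, List.getElem?_eq_none (hlen ▸ hi)]

lemma OccursAt.of_modEq {f : ℕ → Option α} {p a b : ℕ} {u : List α} (hf : Periodic f p)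
    (hab : a ≡ b [MOD p]) (h : OccursAt f a u) : OccursAt f b u := by
  intro i hi
  rw [← h i hi, ← hf.map_mod_nat, ← hf.map_mod_nat (a + i), (hab.add_right i).symm]

lemma OccursAt.append {f : ℕ → Option α} {a : ℕ} {u v : List α}
    (h : OccursAt f a (u ++ v)) :
    OccursAt f a u ∧ OccursAt f (a + u.length) v := by
  constructor
  · intro i hi
    rw [h i (by rw [List.length_append]; omega), List.getElem?_append_left hi]
  · intro i hi
    rw [add_assoc, h _ (by rw [List.length_append]; omega), List.getElem?_append_right (by omega)]
    simp

lemma length_flatten_of_length_eq {w : List (List α)} {n : ℕ} (hw : ∀ u ∈ w, u.length = n) :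
    w.flatten.length = w.length * n := by
  rw [List.length_flatten, List.map_congr_left hw]
  simp

lemma getElem?_flatten_of_length_eq {w : List (List α)} {n : ℕ} (hw : ∀ u ∈ w, u.length = n)
    {j i : ℕ} (hj : j < w.length) (hi : i < n) : w.flatten[j * n + i]? = w[j][i]? := by
  induction w generalizing j with
  | nil => simp at hj
  | cons u w ih =>
    have hu : u.length = n := hw u List.mem_cons_self
    cases j with
    | zero => simp [List.getElem?_append_left (hu ▸ hi : i < u.length)]
    | succ j =>
      rw [List.flatten_cons, List.getElem?_append_right (by rw [hu, Nat.succ_mul]; omega), hu,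
        Nat.succ_mul, show j * n + n + i - n = j * n + i by omega,
        ih (fun v hv => hw v (List.mem_cons_of_mem u hv)) (by simpa using hj)]
      simp

lemma occursAt_cyclicExt_flatten {w : List (List α)} {n : ℕ} (hw : ∀ u ∈ w, u.length = n)
    (hm : 0 < w.length) (j : ℕ) :
    OccursAt (cyclicExt w.flatten) (j * n) (w[j % w.length]'(Nat.mod_lt _ hm)) := by
  have hlen := length_flatten_of_length_eq hw
  have hj := Nat.mod_lt j hm
  refine OccursAt.of_modEq (hlen ▸ periodic_cyclicExt _) ((Nat.mod_modEq j _).mul_right' n) ?_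
  intro i hi
  rw [hw _ (List.getElem_mem _)] at hi
  have hblock : (j % w.length + 1) * n ≤ w.length * n := Nat.mul_le_mul_right n hj
  rw [Nat.succ_mul] at hblock
  rw [cyclicExt_of_lt (by rw [hlen]; omega), getElem?_flatten_of_length_eq hw hj hi]

lemma periodic_cyclicExt_of_periodic_flatten {w : List (List α)} {n s : ℕ}
    (hw : ∀ u ∈ w, u.length = n) (h : Periodic (cyclicExt w.flatten) (s * n)) :
    Periodic (cyclicExt w) s := by
  rcases Nat.eq_zero_or_pos w.length with h0 | hm
  · simp [cyclicExt, List.length_eq_zero_iff.mp h0]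
  intro j
  have hj := (occursAt_cyclicExt_flatten hw hm j).of_modEq h Nat.add_modEq_right.symm
  rw [← add_mul] at hj
  have heq := (occursAt_cyclicExt_flatten hw hm (j + s)).eq hj
    (by simp only [hw _ (List.getElem_mem _)])
  simp only [cyclicExt, List.getElem?_eq_getElem (Nat.mod_lt _ hm), heq]

lemma Prim.not_periodic_cyclicExt_flatten {w : List (List α)} {n s : ℕ} (hw : Prim w)
    (hwn : ∀ u ∈ w, u.length = n) (hs : 0 < s) (hsm : s < w.length) (hdvd : s ∣ w.length) :
    ¬ Periodic (cyclicExt w.flatten) (s * n) := fun h =>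
  not_prim_of_periodic_cyclicExt hs hsm hdvd (periodic_cyclicExt_of_periodic_flatten hwn h) hw

lemma Imprim.exists_periodic_cyclicExt_iff_dvd {z : List α} (hz : Imprim z) (hz₀ : z ≠ []) :
    ∃ p, 0 < p ∧ p < z.length ∧ ∀ s, Periodic (cyclicExt z) s ↔ p ∣ s := by
  obtain ⟨t, k, hk, rfl⟩ := hz
  have ht : 0 < t.length := by
    rw [← List.length_pos_iff, length_wpow] at hz₀
    exact Nat.pos_of_mul_pos_left hz₀
  have htper : Periodic (cyclicExt (wpow t k)) t.length := by
    rw [cyclicExt_wpow t (by omega)]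
    exact periodic_cyclicExt t
  obtain ⟨p, hp, hper⟩ := exists_forall_periodic_iff_dvd ht htper
  have := Nat.le_of_dvd ht ((hper _).1 htper)
  exact ⟨p, hp, by rw [length_wpow]; nlinarith, hper⟩

lemma exists_mul_modEq_mul_gcd {n p : ℕ} (hpn : ¬ p ∣ n) (i : ℕ) :
    ∃ j, j * n ≡ i * Nat.gcd n p [MOD p] := by
  rcases Nat.eq_zero_or_pos p with rfl | hp
  · exact ⟨i, by rw [Nat.gcd_zero_right]⟩
  have hgp : Nat.gcd n p < p :=
    lt_of_le_of_ne (Nat.gcd_le_right _ hp) fun h => hpn (h ▸ Nat.gcd_dvd_left n p)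
  obtain ⟨j, -, hj⟩ := Nat.exists_mul_mod_eq_gcd hgp
  refine ⟨j * i, ?_⟩
  have : n * j ≡ Nat.gcd n p [MOD p] := by rw [Nat.ModEq, hj, Nat.mod_eq_of_lt hgp]
  simpa [mul_comm, mul_left_comm] using this.mul_right i

lemma length_eq_of_eq_append_or {u r q : List α} (h : u = r ++ q ∨ u = q ++ r) :
    u.length = (r ++ q).length := by
  rcases h with rfl | rfl <;> simp [add_comm]

section Windows

variable {f : ℕ → Option α} {g : ℕ} {W : ℕ → List α}

lemma periodic_of_occursAt_shift (hg : 0 < g) (hW : ∀ i, OccursAt f (i * g) (W i))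
    (hlen : ∀ i, g ≤ (W i).length) {d : ℕ}
    (hd : ∀ i, ∀ θ < g, (W (i + d))[θ]? = (W i)[θ]?) :
    Periodic f (d * g) := by
  intro k
  have hθ := Nat.mod_lt k hg
  rw [← Nat.div_add_mod' k g, add_right_comm, ← add_mul, hW _ _ (lt_of_lt_of_le hθ (hlen _)),
    hW _ _ (lt_of_lt_of_le hθ (hlen _)), hd _ _ hθ]

lemma getElem?_succ_eq_of_occursAt (hW : ∀ i, OccursAt f (i * g) (W i)) {n : ℕ}
    (hlen : ∀ i, (W i).length = n) {i θ : ℕ} (hθ : θ + g < n) :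
    (W (i + 1))[θ]? = (W i)[θ + g]? := by
  rw [← hW (i + 1) θ (by rw [hlen]; omega), ← hW i (θ + g) (by rw [hlen]; omega),
    Nat.succ_mul, add_assoc, add_comm g]

lemma periodic_of_occursAt_repeat {r q : List α} (hg : 0 < g) (hgn : g ∣ (r ++ q).length)
    (h2g : 2 * g ≤ (r ++ q).length) (hW : ∀ i, OccursAt f (i * g) (W i))
    (hWrq : ∀ i, W i = r ++ q ∨ W i = q ++ r) {i₀ : ℕ} (hrep : W (i₀ + 1) = W i₀) :
    Periodic f g := by
  have hlen : ∀ i, (W i).length = (r ++ q).length := fun i => length_eq_of_eq_append_or (hWrq i)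
  have h₀ : Periodic (cyclicExt (W i₀)) g :=
    periodic_cyclicExt_of_getElem?_add hg (hlen i₀ ▸ hgn) fun θ hθ => by
      rw [← getElem?_succ_eq_of_occursAt hW hlen (hlen i₀ ▸ hθ), hrep]
  have hboth : Periodic (cyclicExt (r ++ q)) g ∧ Periodic (cyclicExt (q ++ r)) g := by
    rcases hWrq i₀ with h | h <;> rw [h] at h₀
    exacts [⟨h₀, h₀.cyclicExt_append_comm⟩, ⟨h₀.cyclicExt_append_comm, h₀⟩]
  have hall : ∀ i, Periodic (cyclicExt (W i)) g := fun i => by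
    rcases hWrq i with h | h <;> rw [h]
    exacts [hboth.1, hboth.2]
  rw [← one_mul g]
  refine periodic_of_occursAt_shift hg hW (fun i => by rw [hlen]; omega) fun i θ hθ => ?_
  have := hlen i
  rw [getElem?_succ_eq_of_occursAt hW hlen (by omega), ← cyclicExt_of_lt (by omega), hall,
    cyclicExt_of_lt (by omega)]

lemma periodic_two_mul_of_occursAt_alternating {x y : List α} (hg : 0 < g)
    (hW : ∀ i, OccursAt f (i * g) (W i)) (hlen : ∀ i, g ≤ (W i).length)
    (hWxy : ∀ i, W i = x ∨ W i = y) (halt : ∀ i, W (i + 1) ≠ W i) : Periodic f (2 * g) := by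
  have h2 : ∀ i, W (i + 2) = W i := fun i => by
    have h₁ := halt i
    have h₂ := halt (i + 1)
    rcases hWxy i with h | h <;> rcases hWxy (i + 1) with h' | h' <;>
      rcases hWxy (i + 2) with h'' | h'' <;> simp_all
  exact periodic_of_occursAt_shift hg hW hlen fun i θ _ => by rw [h2]

end Windows

section Rotation

variable {F : ℕ → β} {g : ℕ}

lemma not_forall_Ico_add_eq (hg : 0 < g) (hper : ∀ s, Periodic F s ↔ 2 * g ∣ s) (a : ℕ) :
    ¬ ∀ k, a ≤ k → k < a + g → F (k + g) = F k := fun h => by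
  have := Nat.le_of_dvd hg ((hper g).1 (((hper _).2 dvd_rfl).of_forall_Ico_half hg h))
  omega

lemma two_mul_dvd_of_forall_Ico_add_eq (hg : 0 < g) (hper : ∀ s, Periodic F s ↔ 2 * g ∣ s)
    {s a : ℕ} (h : ∀ k, a ≤ k → k < a + 2 * g → F (k + s) = F k) : 2 * g ∣ s :=
  (hper s).1 (((hper _).2 dvd_rfl).of_forall_Ico (by omega) h)

/-- `hσ` and `hρ` say that `r ++ q` occurs at `0` and `q ++ r` at `g`, where `ρ = |r|` and
`σ = |q|`. If `ρ ≥ 2 g` or `σ ≥ 2 g`, one of them is a genuine period relation; otherwise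
`ρ + σ = 3 g` and the two compose on `[ρ - g, ρ)`. Either way `g` acts as a period on an interval
of length `g`. -/
lemma false_of_forall_rotation_eq (hg : 0 < g) (hper : ∀ s, Periodic F s ↔ 2 * g ∣ s)
    {c ρ σ : ℕ} (hc : 0 < c) (hlen : ρ + σ = (2 * c + 1) * g)
    (hσ : ∀ i < σ, F (ρ + i) = F (g + i)) (hρ : ∀ i < ρ, F i = F (g + σ + i)) :
    False := by
  have hP : Periodic F (2 * g) := (hper _).2 dvd_rfl
  have hn : ρ + σ + g = 2 * g * (c + 1) := by rw [hlen]; ring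
  rcases Nat.lt_or_ge ρ (2 * g) with hρ2 | hρ2
  · rcases Nat.lt_or_ge σ (2 * g) with hσ2 | hσ2
    · have hc1 : c = 1 := by
        have := Nat.lt_of_mul_lt_mul_right (show (2 * c + 1) * g < 4 * g by omega)
        omega
      subst hc1
      refine not_forall_Ico_add_eq hg hper (ρ - g) fun k hk₁ hk₂ => ?_
      have e₁ := hρ k (by omega)
      have e₂ := hσ (k + g - ρ) (by omega)
      rw [show g + σ + k = k + 2 * g - ρ + 2 * g by omega, hP] at e₁
      rw [show ρ + (k + g - ρ) = k + g by omega,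
        show g + (k + g - ρ) = k + 2 * g - ρ by omega] at e₂
      rw [e₂, e₁]
    · have hs : 2 * g ∣ ρ + g := by
        refine two_mul_dvd_of_forall_Ico_add_eq hg hper (a := g) fun k hk₁ hk₂ => ?_
        rw [show k + (ρ + g) = ρ + (k - g) + 2 * g by omega, hP, hσ _ (by omega),
          show g + (k - g) = k by omega]
      have hσ' : 2 * g ∣ σ := by
        rw [← Nat.dvd_add_right hs, show ρ + g + σ = 2 * g * (c + 1) by omega]
        exact dvd_mul_right _ _
      have hgρ : g ≤ ρ := by
        have := Nat.le_of_dvd (by omega) hs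
        omega
      refine not_forall_Ico_add_eq hg hper 0 fun k _ hk => ?_
      rw [hρ k (by omega), add_right_comm, (hper _).2 hσ', add_comm]
  · have hs : 2 * g ∣ g + σ := by
      refine two_mul_dvd_of_forall_Ico_add_eq hg hper (a := 0) fun k _ hk => ?_
      rw [add_comm, ← hρ k (by omega)]
    have hρ' : 2 * g ∣ ρ := by
      rw [← Nat.dvd_add_right hs, show g + σ + ρ = 2 * g * (c + 1) by omega]
      exact dvd_mul_right _ _
    have hgσ : g ≤ σ := by
      have := Nat.le_of_dvd (by omega) hs
      omega
    refine not_forall_Ico_add_eq hg hper 0 fun k _ hk => ?_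
    rw [add_comm, ← hσ k (by omega), add_comm, (hper _).2 hρ']

end Rotation

lemma false_of_occursAt_rotation {F : ℕ → Option α} {g c : ℕ} (hg : 0 < g) (hc : 0 < c)
    (hper : ∀ s, Periodic F s ↔ 2 * g ∣ s) {r q : List α}
    (hlen : (r ++ q).length = (2 * c + 1) * g)
    (h₀ : OccursAt F 0 (r ++ q)) (h₁ : OccursAt F g (q ++ r)) : False := by
  obtain ⟨hr₀, hq₀⟩ := h₀.append
  obtain ⟨hq₁, hr₁⟩ := h₁.append
  refine false_of_forall_rotation_eq hg hper hc (by simpa using hlen) (fun i hi => ?_)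
    fun i hi => ?_
  · rw [hq₁ i hi, ← hq₀ i hi, zero_add]
  · rw [hr₁ i hi, ← hr₀ i hi, zero_add]

lemma false_of_occursAt_alternating {f : ℕ → Option α} {p g : ℕ} {r q : List α}
    {W : ℕ → List α} (hper : ∀ s, Periodic f s ↔ p ∣ s) (hpn : ¬ p ∣ (r ++ q).length)
    (hg : 0 < g) (hgp : g ∣ p) (hgn : g ∣ (r ++ q).length) (h2g : 2 * g ≤ (r ++ q).length)
    (hW : ∀ i, OccursAt f (i * g) (W i)) (hWrq : ∀ i, W i = r ++ q ∨ W i = q ++ r)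
    (halt : ∀ i, W (i + 1) ≠ W i) : False := by
  set n := (r ++ q).length
  have hlen : ∀ i, (W i).length = n := fun i => length_eq_of_eq_append_or (hWrq i)
  have hp2 : p = 2 * g := by
    have hdvd : p ∣ 2 * g := (hper _).1 <| periodic_two_mul_of_occursAt_alternating hg hW
      (fun i => by rw [hlen]; omega) hWrq halt
    obtain ⟨e, rfl⟩ := hgp
    have := Nat.le_of_dvd two_pos (Nat.dvd_of_mul_dvd_mul_left hg (mul_comm 2 g ▸ hdvd))
    interval_cases e
    · rw [mul_zero, zero_dvd_iff] at hdvd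
      omega
    · exact (hpn (by rwa [mul_one])).elim
    · ring
  obtain ⟨K, hK⟩ := hgn
  obtain ⟨c, rfl⟩ : Odd K := Nat.not_even_iff_odd.mp fun ⟨j, hj⟩ =>
    hpn ⟨j, by rw [hK, hp2, hj]; ring⟩
  have hper' : ∀ s, Periodic f s ↔ 2 * g ∣ s := hp2 ▸ hper
  have hn : n = (2 * c + 1) * g := by rw [hK, mul_comm]
  have hc : 0 < c := Nat.pos_of_ne_zero fun h => by subst h; omega
  have h₀ := hW 0
  have h₁ := hW 1
  rw [zero_mul] at h₀
  rw [one_mul] at h₁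
  rcases hWrq 0 with h0 | h0 <;> rcases hWrq 1 with h1 | h1
  · exact halt 0 (h1.trans h0.symm)
  · exact false_of_occursAt_rotation hg hc hper' hn (h0 ▸ h₀) (h1 ▸ h₁)
  · refine false_of_occursAt_rotation hg hc hper' ?_ (h0 ▸ h₀) (h1 ▸ h₁)
    rwa [List.length_append, add_comm, ← List.length_append]
  · exact halt 0 (h1.trans h0.symm)

lemma false_of_occursAt_mul_gcd {f : ℕ → Option α} {p : ℕ} {r q : List α}
    (hper : ∀ s, Periodic f s ↔ p ∣ s) (hpn : ¬ p ∣ (r ++ q).length) (hnp : ¬ (r ++ q).length ∣ p)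
    (hwin : ∀ i, ∃ u, (u = r ++ q ∨ u = q ++ r) ∧
      OccursAt f (i * Nat.gcd (r ++ q).length p) u) :
    False := by
  set n := (r ++ q).length
  set g := Nat.gcd n p
  have hp : 0 < p := Nat.pos_of_ne_zero fun h => hnp (h ▸ dvd_zero n)
  have hg : 0 < g := Nat.gcd_pos_of_pos_right n hp
  have hgn : g ∣ n := Nat.gcd_dvd_left n p
  have h2g : 2 * g ≤ n := by
    obtain ⟨K, hK⟩ := hgn
    rcases K with _ | _ | K
    · exact (hpn (by rw [hK, mul_zero]; exact dvd_zero p)).elim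
    · exact (hnp (by rw [hK, zero_add, mul_one]; exact Nat.gcd_dvd_right n p)).elim
    · rw [hK]
      nlinarith
  choose W hWrq hW using hwin
  by_cases hrep : ∃ i, W (i + 1) = W i
  · obtain ⟨i₀, h⟩ := hrep
    exact hpn (((hper g).1 (periodic_of_occursAt_repeat hg hgn h2g hW hWrq h)).trans hgn)
  · push Not at hrep
    exact false_of_occursAt_alternating hper hpn hg (Nat.gcd_dvd_right n p) hgn h2g hW hWrq hrep

end

/-- If `x`,`y` have equal length and don't commute, and a primitive list `w` over `{x,y}`
of length at least 2 has imprimitive concatenation, then `x` and `y` are not conjugate. -/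
theorem bin_imprim_not_conjug {α : Type*} (x y : List α) (w : List (List α))
    (hlen : x.length = y.length) (hcomm : x ++ y ≠ y ++ x)
    (hw : ∀ a ∈ w, a = x ∨ a = y) (hwlen : 2 ≤ w.length)
    (hwprim : Prim w) (himprim : Imprim w.flatten) :
    ¬ ∃ r q : List α, x = r ++ q ∧ y = q ++ r := by
  rintro ⟨r, q, rfl, rfl⟩
  set n := (r ++ q).length
  have hn : 0 < n := List.length_pos_iff.mpr fun h => hcomm (by simp_all)
  have hwn : ∀ u ∈ w, u.length = n := fun u hu => by
    rcases hw u hu with rfl | rfl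
    exacts [rfl, hlen.symm]
  have hL := length_flatten_of_length_eq hwn
  obtain ⟨p, hp, hpL, hper⟩ :=
    himprim.exists_periodic_cyclicExt_iff_dvd (List.length_pos_iff.mp (by rw [hL]; positivity))
  have hpn : ¬ p ∣ n := fun h =>
    hwprim.not_periodic_cyclicExt_flatten hwn one_pos hwlen (one_dvd _)
      ((hper _).2 (by rwa [one_mul]))
  have hnp : ¬ n ∣ p := by
    rintro ⟨s, rfl⟩
    have hsL : n * s ∣ n * w.length := mul_comm w.length n ▸ hL ▸ (hper _).1 (periodic_cyclicExt _)
    rw [hL] at hpL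
    exact hwprim.not_periodic_cyclicExt_flatten hwn (Nat.pos_of_mul_pos_left hp) (by nlinarith)
      (Nat.dvd_of_mul_dvd_mul_left hn hsL) ((hper _).2 ⟨1, by ring⟩)
  refine false_of_occursAt_mul_gcd hper hpn hnp fun i => ?_
  obtain ⟨j, hj⟩ := exists_mul_modEq_mul_gcd hpn i
  exact ⟨_, hw _ (List.getElem_mem _),
    (occursAt_cyclicExt_flatten hwn (by omega) j).of_modEq ((hper _).2 dvd_rfl) hj⟩
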